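/- arXiv:2208.05731 — 5 statements merged into one kernel-verified Lean document; each statement's English description precedes it below -/
import Mathlib

section
/- Let c > 0, b > 0 and let r, m be real numbers with 0 < m < r and r > 1. Let f₀ > (b/c)^{1/(r-m)}. Then there is no differentiable function f : [0,∞) → ℝ with f(0) = f₀, f(t) > 0 for all t ≥ 0, and f'(t) = c·f(t)^r − b·f(t)^m for all t ≥ 0; that is, every such solution blows up in finite time. -/
/-! On `{f ≥ f₀}` the right-hand side dominates `δ f^r` with `δ = c - b f₀^(m-r) > 0`, so `f` can
never drop below `f₀` (its velocity is positive there). Then `f^(1-r)` has derivative at most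
`-(r-1) δ`, so this positive function would have to become negative in finite time. -/

open Set Real

section RightDerivOnIci

variable {f f' : ℝ → ℝ} (hf : ∀ t, 0 ≤ t → HasDerivWithinAt f (f' t) (Ici 0) t)
include hf

theorem continuousOn_Icc_of_hasDerivWithinAt_Ici (T : ℝ) : ContinuousOn f (Icc 0 T) :=
  fun t ht => (hf t ht.1).continuousWithinAt.mono Icc_subset_Ici_self

theorem hasDerivWithinAt_Ici_self_of_hasDerivWithinAt_Ici {t : ℝ} (ht : 0 ≤ t) :
    HasDerivWithinAt f (f' t) (Ici t) t :=
  (hf t ht).mono (Ici_subset_Ici.mpr ht)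

theorem le_of_hasDerivWithinAt_Ici_of_pos_at_level {a : ℝ} (h0 : a ≤ f 0)
    (hlevel : ∀ t, 0 ≤ t → f t = a → 0 < f' t) {t : ℝ} (ht : 0 ≤ t) : a ≤ f t := by
  have key := image_le_of_deriv_right_lt_deriv_boundary' (f := fun s => -f s) (f' := fun s => -f' s)
    (B := fun _ => -a) (B' := fun _ => 0)
    (continuousOn_Icc_of_hasDerivWithinAt_Ici hf t).neg
    (fun s hs => (hasDerivWithinAt_Ici_self_of_hasDerivWithinAt_Ici hf hs.1).neg)
    (neg_le_neg h0) continuousOn_const (fun _ _ => hasDerivWithinAt_const _ _ _)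
    (fun s hs hfs => neg_neg_of_pos (hlevel s hs.1 (neg_inj.mp hfs)))
  exact neg_le_neg_iff.mp (key ⟨ht, le_rfl⟩)

theorem le_sub_mul_of_hasDerivWithinAt_Ici_le {δ : ℝ} (hle : ∀ t, 0 ≤ t → f' t ≤ -δ) {t : ℝ}
    (ht : 0 ≤ t) : f t ≤ f 0 - δ * t := by
  have key := image_le_of_deriv_right_le_deriv_boundary (B := fun s => f 0 - δ * s)
    (B' := fun _ => -δ) (continuousOn_Icc_of_hasDerivWithinAt_Ici hf t)
    (fun s hs => hasDerivWithinAt_Ici_self_of_hasDerivWithinAt_Ici hf hs.1) (by simp)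
    (by fun_prop)
    (fun s _ => by simpa using ((hasDerivAt_id s).const_mul δ).const_sub (f 0) |>.hasDerivWithinAt)
    (fun s hs => hle s hs.1)
  exact key ⟨ht, le_rfl⟩

theorem false_of_pos_of_hasDerivWithinAt_Ici_ge_mul_rpow {δ r : ℝ} (hδ : 0 < δ) (hr : 1 < r)
    (hpos : ∀ t, 0 ≤ t → 0 < f t) (hgrowth : ∀ t, 0 ≤ t → δ * f t ^ r ≤ f' t) : False := by
  have hderiv : ∀ t, 0 ≤ t → HasDerivWithinAt (fun s => f s ^ (1 - r))
      (f' t * (1 - r) * f t ^ (1 - r - 1)) (Ici 0) t :=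
    fun t ht => (hf t ht).rpow_const (Or.inl (hpos t ht).ne')
  have hdecay : ∀ t, 0 ≤ t → f' t * (1 - r) * f t ^ (1 - r - 1) ≤ -((r - 1) * δ) := by
    intro t ht
    have hfr : 0 < f t ^ r := rpow_pos_of_pos (hpos t ht) r
    have hδle : δ ≤ f' t / f t ^ r := (le_div_iff₀ hfr).mpr (hgrowth t ht)
    rw [show 1 - r - 1 = -r by ring, rpow_neg (hpos t ht).le]
    have := mul_le_mul_of_nonneg_left hδle (by linarith : (0 : ℝ) ≤ r - 1)
    rw [div_eq_mul_inv] at this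
    linarith
  set T := f 0 ^ (1 - r) / ((r - 1) * δ)
  have hT : 0 ≤ T := div_nonneg (rpow_pos_of_pos (hpos 0 le_rfl) _).le
    (mul_pos (by linarith) hδ).le
  have hfT := le_sub_mul_of_hasDerivWithinAt_Ici_le hderiv hdecay hT
  rw [mul_div_cancel₀ _ (mul_pos (by linarith) hδ).ne', sub_self] at hfT
  exact (rpow_pos_of_pos (hpos T hT) _).not_ge hfT

end RightDerivOnIci

theorem sub_mul_rpow_le_mul_rpow_sub_mul_rpow {a b c m r x : ℝ} (hb : 0 ≤ b) (hmr : m ≤ r)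
    (ha : 0 < a) (hax : a ≤ x) : (c - b * a ^ (m - r)) * x ^ r ≤ c * x ^ r - b * x ^ m := by
  have hx : 0 < x := ha.trans_le hax
  have hsplit : x ^ m = x ^ (m - r) * x ^ r := by rw [← rpow_add hx]; ring_nf
  have hmono : x ^ (m - r) ≤ a ^ (m - r) := rpow_le_rpow_of_nonpos ha hax (by linarith)
  have := mul_le_mul_of_nonneg_left (mul_le_mul_of_nonneg_right hmono (rpow_pos_of_pos hx r).le) hb
  rw [hsplit]
  linarith

theorem sub_mul_rpow_pos_of_rpow_inv_lt {a b c m r : ℝ} (hc : 0 < c) (hb : 0 ≤ b) (hmr : m < r)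
    (ha : (b / c) ^ (1 / (r - m)) < a) : 0 < c - b * a ^ (m - r) := by
  have hrm : 0 < r - m := by linarith
  have hbc : 0 ≤ b / c := div_nonneg hb hc.le
  have hpow : b / c < a ^ (r - m) := by
    have := rpow_lt_rpow (rpow_nonneg hbc _) ha hrm
    rwa [← rpow_mul hbc, one_div_mul_cancel hrm.ne', rpow_one] at this
  have ha0 : 0 < a := (rpow_nonneg hbc _).trans_lt ha
  rw [show m - r = -(r - m) by ring, rpow_neg ha0.le, sub_pos, ← div_eq_mul_inv]
  exact (div_lt_iff₀ (rpow_pos_of_pos ha0 _)).mpr ((div_lt_iff₀' hc).mp hpow)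

theorem stmt_4_general (c b r m f₀ : ℝ) (hc : 0 < c) (hb : 0 < b)
    (hmr : m < r) (hr : 1 < r)
    (hf₀ : (b / c) ^ (1 / (r - m)) < f₀) :
    ¬ ∃ f : ℝ → ℝ,
        f 0 = f₀ ∧
        (∀ t : ℝ, 0 ≤ t → 0 < f t) ∧
        (∀ t : ℝ, 0 ≤ t →
          HasDerivWithinAt f (c * f t ^ r - b * f t ^ m) (Set.Ici 0) t) := by
  rintro ⟨f, hf0, hpos, hf⟩
  set δ := c - b * f₀ ^ (m - r)
  have hδ : 0 < δ := sub_mul_rpow_pos_of_rpow_inv_lt hc hb.le hmr hf₀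
  have hf₀pos : 0 < f₀ := hf0 ▸ hpos 0 le_rfl
  have hgrowth_of_ge : ∀ t, f₀ ≤ f t → δ * f t ^ r ≤ c * f t ^ r - b * f t ^ m :=
    fun t => sub_mul_rpow_le_mul_rpow_sub_mul_rpow hb.le hmr.le hf₀pos
  have hge : ∀ t, 0 ≤ t → f₀ ≤ f t := fun t =>
    le_of_hasDerivWithinAt_Ici_of_pos_at_level hf hf0.ge fun s hs hfs =>
      (mul_pos hδ (rpow_pos_of_pos (hpos s hs) r)).trans_le (hgrowth_of_ge s (hfs ▸ le_rfl))
  exact false_of_pos_of_hasDerivWithinAt_Ici_ge_mul_rpow hf hδ hr hpos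
    fun t ht => hgrowth_of_ge t (hge t ht)

/-- Blow-up of the ODE subsolution (Theorem 4.1, first case): for `c, b > 0`,
`0 < m < r`, `r > 1` and `f₀ > (b/c)^(1/(r-m))`, there is no function
`f : [0,∞) → ℝ` with `f(0) = f₀`, `f > 0` on `[0,∞)`, solving
`f' = c·f^r − b·f^m` on `[0,∞)`. -/
theorem stmt_4 (c b r m f₀ : ℝ) (hc : 0 < c) (hb : 0 < b)
    (hm : 0 < m) (hmr : m < r) (hr : 1 < r)
    (hf₀ : (b / c) ^ (1 / (r - m)) < f₀) :
    ¬ ∃ f : ℝ → ℝ,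
        f 0 = f₀ ∧
        (∀ t : ℝ, 0 ≤ t → 0 < f t) ∧
        (∀ t : ℝ, 0 ≤ t →
          HasDerivWithinAt f (c * f t ^ r - b * f t ^ m) (Set.Ici 0) t) :=
  stmt_4_general c b r m f₀ hc hb hmr hr hf₀
end

section
/- Let c > 0, b > 0 and let r, m be real numbers with 0 < m < r. Let f₀ > (b/c)^{1/(r-m)} and let T > 0. If f : [0,T] → ℝ is differentiable with f(0) = f₀, f(t) > 0 for all t ∈ [0,T], and f'(t) = c·f(t)^r − b·f(t)^m for all t ∈ [0,T], then f(t) ≥ f₀ for all t ∈ [0,T]. -/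
/-- Monotonicity claim `f(t) ≥ f₀` in the proof of Theorem 4.1: for the ODE
`f' = c·f^r − b·f^m` on `[0,T]` with `0 < m < r` and
`f(0) = f₀ > (b/c)^(1/(r-m))`, the positive solution never drops below `f₀`. -/
theorem stmt_5 (c b r m f₀ T : ℝ) (hc : 0 < c) (hb : 0 < b)
    (hm : 0 < m) (hmr : m < r)
    (hf₀ : (b / c) ^ (1 / (r - m)) < f₀) (hT : 0 < T)
    (f : ℝ → ℝ) (hf0 : f 0 = f₀)
    (hpos : ∀ t ∈ Set.Icc (0 : ℝ) T, 0 < f t)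
    (hderiv : ∀ t ∈ Set.Icc (0 : ℝ) T,
      HasDerivWithinAt f (c * f t ^ r - b * f t ^ m) (Set.Icc 0 T) t) :
    ∀ t ∈ Set.Icc (0 : ℝ) T, f₀ ≤ f t := by
  set θ : ℝ := (b / c) ^ (1 / (r - m)) with hθdef
  have hrm : (0:ℝ) < r - m := by linarith
  have hbc : (0:ℝ) < b / c := div_pos hb hc
  have hθpos : 0 < θ := Real.rpow_pos_of_pos hbc _
  have hθpow : θ ^ (r - m) = b / c := by
    rw [hθdef, one_div, Real.rpow_inv_rpow hbc.le hrm.ne']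
  -- key positivity of the RHS above θ
  have key : ∀ x : ℝ, θ < x → 0 < c * x ^ r - b * x ^ m := by
    intro x hx
    have hx0 : 0 < x := hθpos.trans hx
    have h1 : b / c < x ^ (r - m) := by
      rw [← hθpow]
      exact Real.rpow_lt_rpow hθpos.le hx hrm
    have h2 : x ^ r = x ^ m * x ^ (r - m) := by
      rw [← Real.rpow_add hx0]; ring_nf
    have hxm : 0 < x ^ m := Real.rpow_pos_of_pos hx0 m
    have h3 : b * x ^ m < c * x ^ r := by
      rw [h2]
      calc b * x ^ m = c * x ^ m * (b / c) := by field_simp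
        _ < c * x ^ m * x ^ (r - m) := by
            apply mul_lt_mul_of_pos_left h1 (by positivity)
        _ = c * (x ^ m * x ^ (r - m)) := by ring
    linarith
  have hcont : ContinuousOn f (Set.Icc 0 T) := fun t ht =>
    (hderiv t ht).continuousWithinAt
  -- derivative off the boundary
  have hderiv' : ∀ x ∈ Set.Ioo (0:ℝ) T, deriv f x = c * f x ^ r - b * f x ^ m := by
    intro x hx
    have hmem : Set.Icc (0:ℝ) T ∈ nhds x :=
      Filter.mem_of_superset (isOpen_Ioo.mem_nhds hx) Set.Ioo_subset_Icc_self
    exact ((hderiv x (Set.Ioo_subset_Icc_self hx)).hasDerivAt hmem).deriv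
  set θ' : ℝ := (θ + f₀) / 2 with hθ'def
  have hθθ' : θ < θ' := by simp only [hθ'def]; linarith
  have hθ'f₀ : θ' < f₀ := by simp only [hθ'def]; linarith
  -- Claim: f > θ' everywhere on [0,T]
  have hA : ∀ t ∈ Set.Icc (0:ℝ) T, θ' < f t := by
    by_contra h
    push_neg at h
    obtain ⟨t₀, ht₀, ht₀le⟩ := h
    set S : Set ℝ := {t ∈ Set.Icc (0:ℝ) T | f t ≤ θ'} with hSdef
    have hSne : S.Nonempty := ⟨t₀, ht₀, ht₀le⟩
    have hSclosed : IsClosed S := by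
      have : S = Set.Icc (0:ℝ) T ∩ f ⁻¹' (Set.Iic θ') := by
        ext x; simp [hSdef, Set.mem_Iic, and_comm]
      rw [this]
      exact (hcont.preimage_isClosed_of_isClosed isClosed_Icc isClosed_Iic)
    have hSbdd : BddBelow S := ⟨0, fun x hx => hx.1.1⟩
    set t₁ : ℝ := sInf S with ht₁def
    have ht₁S : t₁ ∈ S := hSclosed.csInf_mem hSne hSbdd
    have ht₁Icc : t₁ ∈ Set.Icc (0:ℝ) T := ht₁S.1
    have ht₁f : f t₁ ≤ θ' := ht₁S.2
    have ht₁ne : t₁ ≠ 0 := by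
      intro h0
      rw [h0, hf0] at ht₁f
      linarith
    have ht₁pos : 0 < t₁ := lt_of_le_of_ne ht₁Icc.1 (Ne.symm ht₁ne)
    have hbefore : ∀ s ∈ Set.Ico (0:ℝ) t₁, θ' < f s := by
      intro s hs
      by_contra hle
      push_neg at hle
      have : s ∈ S := ⟨⟨hs.1, hs.2.le.trans ht₁Icc.2⟩, hle⟩
      exact absurd (csInf_le hSbdd this) (not_le.mpr hs.2)
    have hsub : Set.Icc (0:ℝ) t₁ ⊆ Set.Icc 0 T :=
      Set.Icc_subset_Icc le_rfl ht₁Icc.2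
    have hmono : StrictMonoOn f (Set.Icc (0:ℝ) t₁) := by
      apply strictMonoOn_of_deriv_pos (convex_Icc _ _) (hcont.mono hsub)
      intro x hx
      rw [interior_Icc] at hx
      have hx' : x ∈ Set.Ioo (0:ℝ) T := ⟨hx.1, hx.2.trans_le ht₁Icc.2⟩
      rw [hderiv' x hx']
      exact key _ ((hθθ'.trans (hbefore x ⟨hx.1.le, hx.2⟩)))
    have : f 0 < f t₁ := hmono ⟨le_rfl, ht₁pos.le⟩ ⟨ht₁pos.le, le_rfl⟩ ht₁pos
    rw [hf0] at this
    linarith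
  -- conclude: deriv positive everywhere, so f nondecreasing
  have hmono : StrictMonoOn f (Set.Icc (0:ℝ) T) := by
    apply strictMonoOn_of_deriv_pos (convex_Icc _ _) hcont
    intro x hx
    rw [interior_Icc] at hx
    rw [hderiv' x hx]
    exact key _ (hθθ'.trans (hA x (Set.Ioo_subset_Icc_self hx)))
  intro t ht
  rcases eq_or_lt_of_le ht.1 with h0 | h0
  · rw [← h0, hf0]
  · have := hmono (Set.left_mem_Icc.mpr hT.le) ht h0
    rw [hf0] at this
    linarith
end

section
/- Let (Ω, μ) be a measure space with 0 < μ(Ω) < ∞, let k₀ > 0, b > 0, and let l, m be real numbers with l > 1 and 0 < m < l. Let u : Ω → ℝ be measurable with u ≥ 0 almost everywhere and u^l integrable, and set V = ∫_Ω u dμ. If k₀·V^{l-m}·μ(Ω)^{-(l-m)(l-1)/l} − b·μ(Ω)^{(l-m)/l} ≥ 1, then k₀·∫_Ω u^l dμ − b·∫_Ω u^m dμ ≥ μ(Ω)^{-m(l-1)/l} · V^m. -/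
/-!
Write `a = (∫ u^l)^(1/l)` and `c = μ(Ω)^(-(l-1)/l) · V`. Hölder's inequality against the constant
`1` gives `c ≤ a` and `∫ u^m ≤ a^m μ(Ω)^((l-m)/l)`, while the hypothesis reads
`k₀ c^(l-m) - b μ(Ω)^((l-m)/l) ≥ 1`. Hence
`k₀ ∫ u^l - b ∫ u^m ≥ a^m (k₀ a^(l-m) - b μ(Ω)^((l-m)/l)) ≥ a^m ≥ c^m`, and `c^m` is the left-hand side.
-/

open MeasureTheory

theorem integral_rpow_le_integral_rpow_mul_measureReal_univ {Ω : Type*} [MeasurableSpace Ω]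
    {μ : Measure Ω} [IsFiniteMeasure μ] {l s : ℝ} (hs : 0 < s) (hsl : s < l) {u : Ω → ℝ}
    (hu : AEMeasurable u μ) (hu0 : 0 ≤ᵐ[μ] u) (hint : Integrable (fun x => u x ^ l) μ) :
    ∫ x, u x ^ s ∂μ ≤ (∫ x, u x ^ l ∂μ) ^ (s / l) * μ.real Set.univ ^ ((l - s) / l) := by
  have hθ : 0 < s / l := div_pos hs (hs.trans hsl)
  have hθ1 : s / l < 1 := (div_lt_one (hs.trans hsl)).2 hsl
  have hpow : (fun x => (u x ^ s) ^ (l / s)) =ᵐ[μ] fun x => u x ^ l := by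
    filter_upwards [hu0] with x hx
    rw [← Real.rpow_mul hx, mul_div_cancel₀ _ hs.ne']
  have hmem : MemLp (fun x => u x ^ s) (ENNReal.ofReal (s / l)⁻¹) μ := by
    rw [← integrable_norm_rpow_iff (hu.pow_const s).aestronglyMeasurable
      (by simpa using div_pos (hs.trans hsl) hs) ENNReal.ofReal_ne_top,
      ENNReal.toReal_ofReal (inv_pos.2 hθ).le, inv_div]
    refine hint.congr (hpow.symm.trans ?_)
    filter_upwards [hu0] with x hx
    rw [Real.norm_of_nonneg (Real.rpow_nonneg hx s)]
  have hHolder := integral_mul_le_Lp_mul_Lq_of_nonneg (Real.HolderConjugate.inv_one_sub_inv hθ hθ1)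
    (hu0.mono fun x hx => Real.rpow_nonneg hx s) (ae_of_all _ fun _ => zero_le_one) hmem
    (memLp_const (1 : ℝ))
  rw [sub_div, div_self (hs.trans hsl).ne']
  simpa [integral_congr_ae hpow] using hHolder

theorem rpow_le_mul_rpow_sub_mul_of_one_le {a c N B k₀ b l m : ℝ} (hc : 0 ≤ c) (hca : c ≤ a)
    (hk₀ : 0 ≤ k₀) (hb : 0 ≤ b) (hm : 0 ≤ m) (hml : m ≤ l) (hl : l ≠ 0)
    (hB : B ≤ a ^ m * N) (hJ : 1 ≤ k₀ * c ^ (l - m) - b * N) :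
    c ^ m ≤ k₀ * a ^ l - b * B := by
  have ha : 0 ≤ a := hc.trans hca
  calc c ^ m ≤ a ^ m := Real.rpow_le_rpow hc hca hm
    _ ≤ a ^ m * (k₀ * c ^ (l - m) - b * N) := le_mul_of_one_le_right (by positivity) hJ
    _ ≤ a ^ m * (k₀ * a ^ (l - m) - b * N) := by gcongr
    _ = k₀ * (a ^ m * a ^ (l - m)) - b * (a ^ m * N) := by ring
    _ = k₀ * a ^ l - b * (a ^ m * N) := by
      rw [← Real.rpow_add' ha (by simpa using hl), add_sub_cancel]
    _ ≤ k₀ * a ^ l - b * B := by gcongr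

/-- Hölder chain (E10), case `l > max(m,1)`: on a finite measure space with
`0 < μ(Ω) < ∞`, `u ≥ 0` a.e. with `u^l` integrable, `V = ∫ u`, if
`k₀·V^(l−m)·μ(Ω)^(−(l−m)(l−1)/l) − b·μ(Ω)^((l−m)/l) ≥ 1`, then
`k₀·∫ u^l − b·∫ u^m ≥ μ(Ω)^(−m(l−1)/l)·V^m`. -/
theorem stmt_9 {Ω : Type*} [MeasurableSpace Ω] (μ : Measure Ω)
    (hμ0 : 0 < μ Set.univ) (hμfin : μ Set.univ < ⊤)
    (k₀ b l m : ℝ) (hk₀ : 0 < k₀) (hb : 0 < b)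
    (hl : 1 < l) (hm : 0 < m) (hml : m < l)
    (u : Ω → ℝ) (hu : Measurable u) (hu0 : ∀ᵐ x ∂μ, 0 ≤ u x)
    (hint : Integrable (fun x => u x ^ l) μ)
    (hJ : 1 ≤ k₀ * (∫ x, u x ∂μ) ^ (l - m) *
            (μ Set.univ).toReal ^ (-((l - m) * (l - 1) / l)) -
          b * (μ Set.univ).toReal ^ ((l - m) / l)) :
    (μ Set.univ).toReal ^ (-(m * (l - 1) / l)) * (∫ x, u x ∂μ) ^ m ≤
      k₀ * (∫ x, u x ^ l ∂μ) - b * (∫ x, u x ^ m ∂μ) := by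
  have : IsFiniteMeasure μ := ⟨hμfin⟩
  have hVA := integral_rpow_le_integral_rpow_mul_measureReal_univ one_pos hl
    hu.aemeasurable hu0 hint
  have hBA := integral_rpow_le_integral_rpow_mul_measureReal_univ hm hml hu.aemeasurable hu0 hint
  simp only [Real.rpow_one, one_div, measureReal_def] at hVA hBA
  set M := (μ Set.univ).toReal
  have hM : 0 < M := ENNReal.toReal_pos hμ0.ne' hμfin.ne
  set V := ∫ x, u x ∂μ
  set A := ∫ x, u x ^ l ∂μ
  have hV : 0 ≤ V := integral_nonneg_of_ae hu0
  have hA : 0 ≤ A := integral_nonneg_of_ae (hu0.mono fun x hx => Real.rpow_nonneg hx l)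
  set a := A ^ l⁻¹
  set c := V * M ^ (-((l - 1) / l))
  have hc_pow (t : ℝ) : c ^ t = V ^ t * M ^ (-(t * (l - 1) / l)) := by
    rw [Real.mul_rpow hV (by positivity), ← Real.rpow_mul hM.le]
    ring_nf
  have hca : c ≤ a :=
    calc c = V / M ^ ((l - 1) / l) := by rw [div_eq_mul_inv, ← Real.rpow_neg hM.le]
      _ ≤ a := by rwa [div_le_iff₀ (by positivity)]
  have hAm : A ^ (m / l) = a ^ m := by rw [← Real.rpow_mul hA, div_eq_inv_mul]
  have hAl : A = a ^ l := (Real.rpow_inv_rpow hA (by positivity)).symm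
  rw [mul_comm, ← hc_pow, hAl]
  refine rpow_le_mul_rpow_sub_mul_of_one_le (by positivity) hca hk₀.le hb.le hm.le hml.le
    (by positivity) (hAm ▸ hBA) ?_
  rwa [hc_pow, ← mul_assoc]
end

section
/- Let k > 0, B > 0, l > 1 and T₀ > 0. Then there is no function V : [0,T₀] → ℝ which is continuous on [0,T₀], differentiable on [0,T₀], satisfies V(t) > 0 and V'(t) ≥ k·V(t)^l − B·V(t) for all t ∈ [0,T₀], and V(0) ≥ { (k/B)·(1 − exp(−B·(l−1)·T₀)) }^{-1/(l-1)}. -/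
/-!
Bernoulli substitution: `W = V ^ (1 - l)` turns `V' ≥ k V ^ l - B V` into the linear inequality
`W' ≤ (l - 1) (B W - k)`, so `G t = (W t - k / B) e^{-B (l - 1) t}` is nonincreasing.
The threshold on `V 0` says exactly `G 0 ≤ -(k / B) e^{-B (l - 1) T₀}`,
whereas `W T₀ > 0` gives `G T₀ > -(k / B) e^{-B (l - 1) T₀}`.
-/

open Real Set

noncomputable def bernoulliLyapunov (k B l : ℝ) (V : ℝ → ℝ) (t : ℝ) : ℝ :=
  (V t ^ (1 - l) - k / B) * exp (-(B * (l - 1) * t))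

section Bernoulli

variable {k B l v : ℝ} {V : ℝ → ℝ} {s : Set ℝ} {t : ℝ}

theorem le_mul_rpow_neg_add_mul_rpow_one_sub {x : ℝ} (hx : 0 < x)
    (h : k * x ^ l - B * x ≤ v) : k ≤ v * x ^ (-l) + B * x ^ (1 - l) := by
  have hcancel : x ^ l * x ^ (-l) = 1 := by rw [← rpow_add hx, add_neg_cancel, rpow_zero]
  have h1l : x * x ^ (-l) = x ^ (1 - l) := by
    rw [sub_eq_add_neg, rpow_add hx, rpow_one]
  have := mul_le_mul_of_nonneg_right h (rpow_pos_of_pos hx (-l)).le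
  rw [sub_mul, mul_assoc, mul_assoc, hcancel, h1l] at this
  linarith

theorem hasDerivWithinAt_bernoulliLyapunov (hB : B ≠ 0) (hV : HasDerivWithinAt V v s t)
    (hpos : 0 < V t) :
    HasDerivWithinAt (bernoulliLyapunov k B l V)
      (-((l - 1) * exp (-(B * (l - 1) * t)) * (v * V t ^ (-l) + B * V t ^ (1 - l) - k))) s t := by
  have hW := (hV.rpow_const (p := 1 - l) (Or.inl hpos.ne')).sub_const (k / B)
  have hE : HasDerivWithinAt (fun u ↦ exp (-(B * (l - 1) * u)))
      (exp (-(B * (l - 1) * t)) * -(B * (l - 1))) s t := by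
    simpa using (((hasDerivAt_id t).const_mul (B * (l - 1))).neg.exp).hasDerivWithinAt
  refine (hW.mul hE).congr_deriv ?_
  rw [show 1 - l - 1 = -l by ring]
  field_simp
  ring

theorem antitoneOn_bernoulliLyapunov (hs : Convex ℝ s) (hB : B ≠ 0) (hl : 1 ≤ l)
    (hd : DifferentiableOn ℝ V s) (hpos : ∀ t ∈ s, 0 < V t)
    (hineq : ∀ t ∈ s, k * V t ^ l - B * V t ≤ derivWithin V s t) :
    AntitoneOn (bernoulliLyapunov k B l V) s := by
  have hderiv : ∀ t ∈ s, HasDerivWithinAt (bernoulliLyapunov k B l V)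
      (-((l - 1) * exp (-(B * (l - 1) * t)) *
        (derivWithin V s t * V t ^ (-l) + B * V t ^ (1 - l) - k))) s t :=
    fun t ht ↦ hasDerivWithinAt_bernoulliLyapunov hB (hd t ht).hasDerivWithinAt (hpos t ht)
  refine antitoneOn_of_hasDerivWithinAt_nonpos hs
    (fun t ht ↦ (hderiv t ht).continuousWithinAt)
    (fun t ht ↦ (hderiv t (interior_subset ht)).mono interior_subset) fun t ht ↦ ?_
  have hbound := le_mul_rpow_neg_add_mul_rpow_one_sub (hpos t (interior_subset ht))
    (hineq t (interior_subset ht))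
  have := mul_nonneg (mul_nonneg (sub_nonneg.2 hl) (exp_pos (-(B * (l - 1) * t))).le)
    (sub_nonneg.2 hbound)
  linarith

end Bernoulli

/-- Bernoulli-type blow-up (Theorem 4.1, case `m ≤ 1`): for `k, B > 0`, `l > 1`,
`T₀ > 0`, there is no positive function `V` on `[0,T₀]`, continuous and
differentiable there, with `V' ≥ k·V^l − B·V` and
`V(0) ≥ ((k/B)·(1 − exp(−B·(l−1)·T₀)))^(−1/(l−1))`. -/
theorem stmt_12 (k B l T₀ : ℝ) (hk : 0 < k) (hB : 0 < B) (hl : 1 < l)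
    (hT₀ : 0 < T₀) :
    ¬ ∃ V : ℝ → ℝ,
        ContinuousOn V (Set.Icc 0 T₀) ∧
        DifferentiableOn ℝ V (Set.Icc 0 T₀) ∧
        (∀ t ∈ Set.Icc (0 : ℝ) T₀, 0 < V t) ∧
        (∀ t ∈ Set.Icc (0 : ℝ) T₀,
          k * V t ^ l - B * V t ≤ derivWithin V (Set.Icc 0 T₀) t) ∧
        (k / B * (1 - Real.exp (-(B * (l - 1) * T₀)))) ^ (-(1 / (l - 1))) ≤
          V 0 := by
  rintro ⟨V, -, hd, hpos, hineq, h0⟩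
  have h0mem : (0 : ℝ) ∈ Icc 0 T₀ := ⟨le_rfl, hT₀.le⟩
  have hTmem : T₀ ∈ Icc 0 T₀ := ⟨hT₀.le, le_rfl⟩
  set E := exp (-(B * (l - 1) * T₀))
  have hE1 : E < 1 := exp_lt_one_iff.2 (by nlinarith [mul_pos hB (sub_pos.2 hl)])
  have hC : 0 < k / B * (1 - E) := mul_pos (div_pos hk hB) (sub_pos.2 hE1)
  have hV0 : V 0 ^ (1 - l) ≤ k / B * (1 - E) := by
    rw [show -(1 / (l - 1)) = (1 - l)⁻¹ by rw [one_div, ← inv_neg, neg_sub]] at h0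
    exact (rpow_inv_le_iff_of_neg hC (hpos 0 h0mem) (by linarith)).1 h0
  have hWT : 0 < V T₀ ^ (1 - l) * E := mul_pos (rpow_pos_of_pos (hpos T₀ hTmem) _) (exp_pos _)
  have hG := antitoneOn_bernoulliLyapunov (convex_Icc 0 T₀) hB.ne' hl.le hd hpos hineq
    h0mem hTmem hT₀.le
  simp only [bernoulliLyapunov, mul_zero, neg_zero, exp_zero, mul_one] at hG
  linarith
end

section
/- Let 0 < ε < ω, let γ > 0 and β ≥ 2γ, and define g : [0, ω−ε) → ℝ by g(s) = ((s+ε)^{-γ} − ω^{-γ})^{β/γ}. Then g is twice differentiable on (0, ω−ε) and |g''(s)| ≤ β·(β+1)·min( D(s)^{2(γ+1)/γ}·((s+ε)^{-γ} − ω^{-γ})^{(β+2)/γ}, (s+ε)^{-(β+2)} ), where D(s) = (s+ε)^{-γ} / ((s+ε)^{-γ} − ω^{-γ}). -/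
/-- Estimate (Gl:enq2) for the boundary-layer supersolution: for
`0 < ε < ω`, `γ > 0`, `β ≥ 2γ`, the function
`g(s) = ((s+ε)^(−γ) − ω^(−γ))^(β/γ)` is twice differentiable on `(0, ω−ε)` and
`|g''(s)| ≤ β(β+1)·min(D(s)^(2(γ+1)/γ)·((s+ε)^(−γ) − ω^(−γ))^((β+2)/γ), (s+ε)^(−(β+2)))`,
where `D(s) = (s+ε)^(−γ)/((s+ε)^(−γ) − ω^(−γ))`. -/
theorem stmt_14 (ε ω γ β : ℝ) (hε : 0 < ε) (hεω : ε < ω)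
    (hγ : 0 < γ) (hβ : 2 * γ ≤ β) :
    ∀ s ∈ Set.Ioo (0 : ℝ) (ω - ε),
      DifferentiableAt ℝ
        (fun s : ℝ => ((s + ε) ^ (-γ) - ω ^ (-γ)) ^ (β / γ)) s ∧
      DifferentiableAt ℝ
        (deriv (fun s : ℝ => ((s + ε) ^ (-γ) - ω ^ (-γ)) ^ (β / γ))) s ∧
      |deriv (deriv (fun s : ℝ => ((s + ε) ^ (-γ) - ω ^ (-γ)) ^ (β / γ))) s| ≤
        β * (β + 1) *
          min (((s + ε) ^ (-γ) / ((s + ε) ^ (-γ) - ω ^ (-γ))) ^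
                  (2 * (γ + 1) / γ) *
                ((s + ε) ^ (-γ) - ω ^ (-γ)) ^ ((β + 2) / γ))
              ((s + ε) ^ (-(β + 2))) := by
  intro s hs
  obtain ⟨hs0, hsω⟩ := hs
  have hω : 0 < ω := hε.trans hεω
  have hβpos : 0 < β := by linarith
  have hγne : γ ≠ 0 := hγ.ne'
  have hwpos : ∀ t : ℝ, 0 < t + ε → t + ε < ω → 0 < (t + ε) ^ (-γ) - ω ^ (-γ) := by
    intro t h1 h2
    have h3 : (t + ε) ^ γ < ω ^ γ := Real.rpow_lt_rpow h1.le h2 hγ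
    have h4 : ω ^ (-γ) < (t + ε) ^ (-γ) := by
      rw [Real.rpow_neg hω.le, Real.rpow_neg h1.le]
      exact inv_strictAnti₀ (Real.rpow_pos_of_pos h1 γ) h3
    linarith
  have key : ∀ t ∈ Set.Ioo (-ε) (ω - ε),
      HasDerivAt (fun t : ℝ => ((t + ε) ^ (-γ) - ω ^ (-γ)) ^ (β / γ))
        ((1 * (-γ) * (t + ε) ^ (-γ - 1)) * (β / γ) *
          ((t + ε) ^ (-γ) - ω ^ (-γ)) ^ (β / γ - 1)) t := by
    intro t ht
    have hx : 0 < t + ε := by have := ht.1; linarith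
    have hxω : t + ε < ω := by have := ht.2; linarith
    have hw := hwpos t hx hxω
    have hinner : HasDerivAt (fun t : ℝ => (t + ε) ^ (-γ) - ω ^ (-γ))
        (1 * (-γ) * (t + ε) ^ (-γ - 1)) t :=
      (((hasDerivAt_id t).add_const ε).rpow_const (Or.inl hx.ne')).sub_const _
    exact hinner.rpow_const (Or.inl hw.ne')
  have hsU : s ∈ Set.Ioo (-ε) (ω - ε) := ⟨by linarith, hsω⟩
  have hx : 0 < s + ε := by linarith
  have hxω : s + ε < ω := by linarith
  have hw := hwpos s hx hxω
  have hg1 := key s hsU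
  have heq : deriv (fun s : ℝ => ((s + ε) ^ (-γ) - ω ^ (-γ)) ^ (β / γ)) =ᶠ[nhds s]
      (fun t : ℝ => (1 * (-γ) * (t + ε) ^ (-γ - 1)) * (β / γ) *
        ((t + ε) ^ (-γ) - ω ^ (-γ)) ^ (β / γ - 1)) := by
    filter_upwards [isOpen_Ioo.mem_nhds hsU] with t ht
    exact (key t ht).deriv
  have hd1 : HasDerivAt (fun t : ℝ => 1 * (-γ) * (t + ε) ^ (-γ - 1))
      (1 * -γ * (1 * (-γ - 1) * (s + ε) ^ (-γ - 1 - 1))) s :=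
    HasDerivAt.const_mul _ (((hasDerivAt_id s).add_const ε).rpow_const (Or.inl hx.ne'))
  have hd13 := hd1.mul_const (β / γ)
  have hinner : HasDerivAt (fun t : ℝ => (t + ε) ^ (-γ) - ω ^ (-γ))
      (1 * (-γ) * (s + ε) ^ (-γ - 1)) s :=
    (((hasDerivAt_id s).add_const ε).rpow_const (Or.inl hx.ne')).sub_const _
  have hd3 : HasDerivAt (fun t : ℝ => ((t + ε) ^ (-γ) - ω ^ (-γ)) ^ (β / γ - 1))
      ((1 * (-γ) * (s + ε) ^ (-γ - 1)) * (β / γ - 1) *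
        ((s + ε) ^ (-γ) - ω ^ (-γ)) ^ (β / γ - 1 - 1)) s :=
    hinner.rpow_const (Or.inl hw.ne')
  have hG2 : HasDerivAt (fun t : ℝ => (1 * (-γ) * (t + ε) ^ (-γ - 1)) * (β / γ) *
      ((t + ε) ^ (-γ) - ω ^ (-γ)) ^ (β / γ - 1))
      ((1 * -γ * (1 * (-γ - 1) * (s + ε) ^ (-γ - 1 - 1)) * (β / γ)) *
          ((s + ε) ^ (-γ) - ω ^ (-γ)) ^ (β / γ - 1) +
        ((1 * (-γ) * (s + ε) ^ (-γ - 1)) * (β / γ)) *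
          ((1 * (-γ) * (s + ε) ^ (-γ - 1)) * (β / γ - 1) *
            ((s + ε) ^ (-γ) - ω ^ (-γ)) ^ (β / γ - 1 - 1))) s :=
    hd13.mul hd3
  refine ⟨hg1.differentiableAt, hG2.differentiableAt.congr_of_eventuallyEq heq, ?_⟩
  rw [heq.deriv_eq, hG2.deriv]
  -- notation
  have hωγ : 0 < ω ^ (-γ) := Real.rpow_pos_of_pos hω _
  have hwle : (s + ε) ^ (-γ) - ω ^ (-γ) ≤ (s + ε) ^ (-γ) := by linarith
  have hb : (0:ℝ) < (s + ε) ^ (-γ) := Real.rpow_pos_of_pos hx _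
  have ha : (0:ℝ) < (s + ε) ^ (-γ - 2) := Real.rpow_pos_of_pos hx _
  have hc : (0:ℝ) ≤ ((s + ε) ^ (-γ) - ω ^ (-γ)) ^ (β / γ - 2) := Real.rpow_nonneg hw.le _
  have hsplit : (s + ε) ^ (-γ - 2) * (s + ε) ^ (-γ) =
      (s + ε) ^ (-γ - 1 : ℝ) * (s + ε) ^ (-γ - 1 : ℝ) := by
    rw [← Real.rpow_add hx, ← Real.rpow_add hx]
    congr 1; ring
  have hV : (1 * -γ * (1 * (-γ - 1) * (s + ε) ^ (-γ - 1 - 1)) * (β / γ)) *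
          ((s + ε) ^ (-γ) - ω ^ (-γ)) ^ (β / γ - 1) +
        ((1 * (-γ) * (s + ε) ^ (-γ - 1)) * (β / γ)) *
          ((1 * (-γ) * (s + ε) ^ (-γ - 1)) * (β / γ - 1) *
            ((s + ε) ^ (-γ) - ω ^ (-γ)) ^ (β / γ - 1 - 1)) =
      β * (γ + 1) * (s + ε) ^ (-γ - 2) *
          (((s + ε) ^ (-γ) - ω ^ (-γ)) ^ (β / γ - 2) * ((s + ε) ^ (-γ) - ω ^ (-γ))) +
        β * (β - γ) * ((s + ε) ^ (-γ - 2) * (s + ε) ^ (-γ)) *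
          ((s + ε) ^ (-γ) - ω ^ (-γ)) ^ (β / γ - 2) := by
    rw [hsplit, show (-γ - 1 - 1 : ℝ) = -γ - 2 by ring,
        show β / γ - 1 - 1 = β / γ - 2 by ring,
        show β / γ - 1 = β / γ - 2 + 1 by ring, Real.rpow_add_one hw.ne']
    field_simp
    ring
  rw [hV]
  have hnn : (0:ℝ) ≤ β * (γ + 1) * (s + ε) ^ (-γ - 2) *
          (((s + ε) ^ (-γ) - ω ^ (-γ)) ^ (β / γ - 2) * ((s + ε) ^ (-γ) - ω ^ (-γ))) +
        β * (β - γ) * ((s + ε) ^ (-γ - 2) * (s + ε) ^ (-γ)) *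
          ((s + ε) ^ (-γ) - ω ^ (-γ)) ^ (β / γ - 2) :=
    add_nonneg
      (mul_nonneg (mul_nonneg (mul_nonneg hβpos.le (by linarith)) ha.le)
        (mul_nonneg hc hw.le))
      (mul_nonneg (mul_nonneg (mul_nonneg hβpos.le (by linarith))
        (mul_nonneg ha.le hb.le)) hc)
  have harm1 : ((s + ε) ^ (-γ) / ((s + ε) ^ (-γ) - ω ^ (-γ))) ^ (2 * (γ + 1) / γ) *
        ((s + ε) ^ (-γ) - ω ^ (-γ)) ^ ((β + 2) / γ) =
      (s + ε) ^ (-γ - 2) * (s + ε) ^ (-γ) *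
        ((s + ε) ^ (-γ) - ω ^ (-γ)) ^ (β / γ - 2) := by
    rw [Real.div_rpow hb.le hw.le, ← Real.rpow_mul hx.le, div_mul_eq_mul_div,
        mul_div_assoc, ← Real.rpow_sub hw,
        show (β + 2) / γ - 2 * (γ + 1) / γ = β / γ - 2 by field_simp; ring,
        show -γ * (2 * (γ + 1) / γ) = -γ - 2 + -γ by field_simp; ring,
        Real.rpow_add hx]
  have hexp2 : (0:ℝ) ≤ β / γ - 2 := by
    rw [sub_nonneg, le_div_iff₀ hγ]; linarith
  have harm2 : ((s + ε) ^ (-γ) / ((s + ε) ^ (-γ) - ω ^ (-γ))) ^ (2 * (γ + 1) / γ) *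
        ((s + ε) ^ (-γ) - ω ^ (-γ)) ^ ((β + 2) / γ) ≤ (s + ε) ^ (-(β + 2)) := by
    rw [harm1]
    have h1 : ((s + ε) ^ (-γ) - ω ^ (-γ)) ^ (β / γ - 2) ≤
        ((s + ε) ^ (-γ)) ^ (β / γ - 2) := Real.rpow_le_rpow hw.le hwle hexp2
    calc (s + ε) ^ (-γ - 2) * (s + ε) ^ (-γ) *
          ((s + ε) ^ (-γ) - ω ^ (-γ)) ^ (β / γ - 2)
        ≤ (s + ε) ^ (-γ - 2) * (s + ε) ^ (-γ) * ((s + ε) ^ (-γ)) ^ (β / γ - 2) :=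
          mul_le_mul_of_nonneg_left h1 (mul_nonneg ha.le hb.le)
      _ = (s + ε) ^ (-(β + 2)) := by
          rw [← Real.rpow_mul hx.le, ← Real.rpow_add hx, ← Real.rpow_add hx]
          congr 1; field_simp; ring
  rw [abs_of_nonneg hnn, min_eq_left harm2, harm1]
  have hkey : β * (γ + 1) * ((s + ε) ^ (-γ - 2) *
        ((s + ε) ^ (-γ) - ω ^ (-γ)) ^ (β / γ - 2)) * ((s + ε) ^ (-γ) - ω ^ (-γ)) ≤
      β * (γ + 1) * ((s + ε) ^ (-γ - 2) *
        ((s + ε) ^ (-γ) - ω ^ (-γ)) ^ (β / γ - 2)) * ((s + ε) ^ (-γ)) :=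
    mul_le_mul_of_nonneg_left hwle
      (mul_nonneg (mul_nonneg hβpos.le (by linarith)) (mul_nonneg ha.le hc))
  nlinarith [hkey]
end
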